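/- Let β ≥ 2. For all q, q̃ ∈ ℝ² one has G(q̃) − G(q) − ∇G(q)·(q̃−q) ≥ (1/(β−1)) · max(|p(q)|^{β−2}, |p(q̃)|^{β−2}) · |p(q)−p(q̃)|², where |·| is the Euclidean norm on ℝ² and · is the Euclidean inner product. -/

import Mathlib

/-- `p(q) = (q₁⁻, q₂⁺)` where `t⁻ = max(-t,0)` and `t⁺ = max(t,0)`. -/
noncomputable def pmap (q : ℝ × ℝ) : ℝ × ℝ := (max (-q.1) 0, max q.2 0)

/-- Euclidean norm on `ℝ²`. -/
noncomputable def enorm (p : ℝ × ℝ) : ℝ := Real.sqrt (p.1 ^ 2 + p.2 ^ 2)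

/-- `G(q₁,q₂) = ((q₁⁻)² + (q₂⁺)²)^{β/2}`. -/
noncomputable def Gfun (β : ℝ) (q : ℝ × ℝ) : ℝ :=
  ((pmap q).1 ^ 2 + (pmap q).2 ^ 2) ^ (β / 2)

/-- The gradient `∇G(q) = β |p(q)|^{β-2} (-q₁⁻, q₂⁺)`. -/
noncomputable def gradG (β : ℝ) (q : ℝ × ℝ) : ℝ × ℝ :=
  (β * _root_.enorm (pmap q) ^ (β - 2) * (-(pmap q).1),
   β * _root_.enorm (pmap q) ^ (β - 2) * (pmap q).2)

/-!
Write `a = p(q)`, `b = p(q̃)`, `s = |a|`, `t = |b|`, `u = a · b`. Then `G = |p|^β`, and since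
`x⁺ (y - x) ≤ x⁺ y⁺ - (x⁺)²` the gradient term is at most `β s^{β-2} (u - s²)`, so it suffices to
bound the Bregman divergence of `x ↦ |x|^β` between `a` and `b`. In terms of `s, t, u` with
`0 ≤ u ≤ s t` this bound is affine in `u`, hence it is enough to check `u = 0` (weighted AM–GM) and
`u = s t`, the one-dimensional Bregman bound for `x ↦ x^β`, which follows by monotonicity in `t`.
-/

open Set

lemma rpow_sub_mul_rpow {x p q : ℝ} (hx : 0 ≤ x) (hp : q ≤ p) (hq : 0 < q) :
    x ^ (p - q) * x ^ q = x ^ p := by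
  rw [← Real.rpow_add' hx (by linarith), sub_add_cancel]

lemma rpow_sub_one_mul_sub_le {a b p : ℝ} (hp : 1 ≤ p) (ha : 0 ≤ a) (hab : a ≤ b) :
    b ^ (p - 1) * (b - a) ≤ b ^ p - a ^ p := by
  have hb : 0 ≤ b := ha.trans hab
  have hpow : a ^ (p - 1) ≤ b ^ (p - 1) := Real.rpow_le_rpow ha hab (by linarith)
  rw [← rpow_sub_mul_rpow ha hp one_pos, ← rpow_sub_mul_rpow hb hp one_pos, Real.rpow_one,
    Real.rpow_one]
  nlinarith

noncomputable def rpowBregman (β s t : ℝ) : ℝ := t ^ β - s ^ β - β * s ^ (β - 1) * (t - s)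

lemma hasDerivAt_rpowBregman {β : ℝ} (hβ : 1 ≤ β) (s x : ℝ) :
    HasDerivAt (rpowBregman β s) (β * x ^ (β - 1) - β * s ^ (β - 1)) x := by
  have h := ((Real.hasDerivAt_rpow_const (Or.inr hβ)).sub_const (s ^ β)).sub
    (((hasDerivAt_id x).sub_const s).const_mul (β * s ^ (β - 1)))
  simp only [mul_one] at h
  exact h

lemma continuous_rpowBregman {β : ℝ} (hβ : 1 ≤ β) (s : ℝ) : Continuous (rpowBregman β s) :=
  continuous_iff_continuousAt.2 fun x ↦ (hasDerivAt_rpowBregman hβ s x).continuousAt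

lemma rpowBregman_self (β s : ℝ) : rpowBregman β s s = 0 := by
  simp [rpowBregman]

lemma rpow_mul_sq_le_rpowBregman_of_le {β s t : ℝ} (hβ : 2 ≤ β) (ht : 0 ≤ t) (hts : t ≤ s) :
    s ^ (β - 2) * (t - s) ^ 2 ≤ (β - 1) * rpowBregman β s t := by
  set h : ℝ → ℝ := fun x ↦ (β - 1) * rpowBregman β s x - s ^ (β - 2) * (x - s) ^ 2
  have hderiv (x : ℝ) : HasDerivAt h
      ((β - 1) * (β * x ^ (β - 1) - β * s ^ (β - 1)) - s ^ (β - 2) * (2 * (x - s))) x := by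
    have := ((hasDerivAt_rpowBregman (β := β) (by linarith) s x).const_mul (β - 1)).sub
      ((((hasDerivAt_id x).sub_const s).pow 2).const_mul (s ^ (β - 2)))
    exact this.congr_deriv (by simp)
  have hanti : AntitoneOn h (Icc t s) := by
    refine antitoneOn_of_hasDerivWithinAt_nonpos (convex_Icc t s)
      (continuous_iff_continuousAt.2 fun x ↦ (hderiv x).continuousAt).continuousOn
      (fun x _ ↦ (hderiv x).hasDerivWithinAt) ?_
    intro x hx
    rw [interior_Icc] at hx
    have key := rpow_sub_one_mul_sub_le (p := β - 1) (by linarith) (ht.trans hx.1.le) hx.2.le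
    rw [show β - 1 - 1 = β - 2 by ring] at key
    have hpow : 0 ≤ s ^ (β - 2) * (s - x) :=
      mul_nonneg (Real.rpow_nonneg (by linarith) _) (by linarith [hx.2])
    -- with `key`, the derivative is at most `-(β - 2) (β + 1) s^(β-2) (s - x)`
    nlinarith [mul_nonneg (show 0 ≤ (β - 2) * (β + 1) by nlinarith) hpow,
      mul_nonneg (show 0 ≤ β * (β - 1) by nlinarith) (sub_nonneg.2 key)]
  have := hanti ⟨le_rfl, hts⟩ ⟨hts, le_rfl⟩ hts
  simp only [h, rpowBregman_self, sub_self] at this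
  linarith

lemma rpow_mul_sq_le_rpowBregman_of_ge {β s t : ℝ} (hβ : 2 ≤ β) (hs : 0 ≤ s) (hst : s ≤ t) :
    t ^ (β - 2) * (t - s) ^ 2 ≤ (β - 1) * rpowBregman β s t := by
  set h : ℝ → ℝ := fun x ↦ (β - 1) * rpowBregman β s x - x ^ (β - 2) * (x - s) ^ 2
  have hcont : Continuous h := by
    have := Real.continuous_rpow_const (q := β - 2) (by linarith)
    have := continuous_rpowBregman (β := β) (by linarith) s
    fun_prop
  have hderiv {x : ℝ} (hx : 0 < x) : HasDerivAt h ((β - 1) * (β * x ^ (β - 1) - β * s ^ (β - 1))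
      - ((β - 2) * x ^ (β - 2 - 1) * (x - s) ^ 2 + x ^ (β - 2) * (2 * (x - s)))) x := by
    have := ((hasDerivAt_rpowBregman (β := β) (by linarith) s x).const_mul (β - 1)).sub
      ((Real.hasDerivAt_rpow_const (p := β - 2) (Or.inl hx.ne')).mul
        (((hasDerivAt_id x).sub_const s).pow 2))
    exact this.congr_deriv (by simp)
  have hmono : MonotoneOn h (Icc s t) := by
    refine monotoneOn_of_hasDerivWithinAt_nonneg (convex_Icc s t) hcont.continuousOn
      (fun x hx ↦ (hderiv (hs.trans_lt (interior_Icc (a := s) (b := t) ▸ hx).1)).hasDerivWithinAt)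
      ?_
    intro x hx
    rw [interior_Icc] at hx
    have hx0 : 0 < x := hs.trans_lt hx.1
    have key := rpow_sub_one_mul_sub_le (p := β - 1) (by linarith) hs hx.1.le
    rw [show β - 1 - 1 = β - 2 by ring] at key
    have hsplit : x ^ (β - 2) = x ^ (β - 2 - 1) * x := by
      rw [← Real.rpow_add_one hx0.ne', sub_add_cancel]
    rw [hsplit] at key ⊢
    have hP : 0 ≤ x ^ (β - 2 - 1) * (x - s) :=
      mul_nonneg (Real.rpow_nonneg hx0.le _) (by linarith [hx.1])
    -- with `key`, the derivative is at least `(β - 2) x^(β-3) (x - s) (β x + s)`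
    nlinarith [mul_nonneg (mul_nonneg hP (show 0 ≤ β - 2 by linarith))
        (show 0 ≤ β * x + s by nlinarith),
      mul_nonneg (show 0 ≤ β * (β - 1) by nlinarith) (sub_nonneg.2 key)]
  have := hmono ⟨le_rfl, hst⟩ ⟨hst, le_rfl⟩ hst
  simp only [h, rpowBregman_self, sub_self] at this
  linarith

lemma max_rpow_mul_sq_le_rpowBregman {β s t : ℝ} (hβ : 2 ≤ β) (hs : 0 ≤ s) (ht : 0 ≤ t) :
    max s t ^ (β - 2) * (t - s) ^ 2 ≤ (β - 1) * rpowBregman β s t := by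
  rcases le_total t s with hts | hst
  · rw [max_eq_left hts]
    exact rpow_mul_sq_le_rpowBregman_of_le hβ ht hts
  · rw [max_eq_right hst]
    exact rpow_mul_sq_le_rpowBregman_of_ge hβ hs hst

lemma rpow_sub_two_mul_sq_le {β x y : ℝ} (hβ : 2 ≤ β) (hx : 0 ≤ x) (hy : 0 ≤ y) :
    x ^ (β - 2) * y ^ 2 ≤ (β - 2) / β * x ^ β + 2 / β * y ^ β := by
  have hβ0 : β ≠ 0 := by positivity
  have h := Real.geom_mean_le_arith_mean2_weighted (div_nonneg (by linarith) (by linarith))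
    (by positivity) (Real.rpow_nonneg hx β) (Real.rpow_nonneg hy β)
    (show (β - 2) / β + 2 / β = 1 by field_simp; ring)
  rwa [← Real.rpow_mul hx, ← Real.rpow_mul hy, mul_div_cancel₀ _ hβ0, mul_div_cancel₀ _ hβ0,
    Real.rpow_two] at h

lemma max_rpow_mul_sq_add_sq_le {β s t : ℝ} (hβ : 2 ≤ β) (hs : 0 ≤ s) (ht : 0 ≤ t) :
    max s t ^ (β - 2) * (s ^ 2 + t ^ 2) ≤ (β - 1) * (s ^ β + t ^ β) := by
  wlog hst : s ≤ t generalizing s t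
  · rw [max_comm, add_comm (s ^ 2), add_comm (s ^ β)]
    exact this ht hs (le_of_not_ge hst)
  have hyoung := rpow_sub_two_mul_sq_le hβ ht hs
  have htβ : t ^ (β - 2) * t ^ 2 = t ^ β := by
    rw [← Real.rpow_two, rpow_sub_mul_rpow ht hβ two_pos]
  have hsβ := Real.rpow_nonneg hs β
  have htβ' := Real.rpow_nonneg ht β
  have hc₁ : (β - 2) / β + 1 ≤ β - 1 := by
    rw [div_add_one (by positivity), div_le_iff₀ (by positivity)]; nlinarith
  have hc₂ : 2 / β ≤ β - 1 := by
    rw [div_le_iff₀ (by positivity)]; nlinarith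
  rw [max_eq_right hst]
  nlinarith [mul_le_mul_of_nonneg_right hc₁ htβ', mul_le_mul_of_nonneg_right hc₂ hsβ]

lemma max_rpow_mul_sq_le_of_le_mul {β s t u : ℝ} (hβ : 2 ≤ β) (hs : 0 ≤ s) (ht : 0 ≤ t)
    (hu : 0 ≤ u) (hust : u ≤ s * t) :
    max s t ^ (β - 2) * (s ^ 2 + t ^ 2 - 2 * u) ≤
      (β - 1) * (t ^ β - s ^ β - β * s ^ (β - 2) * (u - s ^ 2)) := by
  set M := max s t ^ (β - 2)
  have hs₁ : s ^ (β - 2) * s = s ^ (β - 1) := by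
    rw [show β - 2 = β - 1 - 1 by ring]
    simpa using rpow_sub_mul_rpow hs (p := β - 1) (by linarith) one_pos
  have hs₂ : s ^ (β - 2) * s ^ 2 = s ^ β := by
    rw [← Real.rpow_two, rpow_sub_mul_rpow hs hβ two_pos]
  have at_zero : M * (s ^ 2 + t ^ 2) ≤ (β - 1) * (t ^ β - s ^ β + β * s ^ β) := by
    nlinarith [max_rpow_mul_sq_add_sq_le hβ hs ht,
      mul_nonneg (show 0 ≤ (β - 1) * (β - 2) by nlinarith) (Real.rpow_nonneg hs β)]
  have at_mul : M * (t - s) ^ 2 ≤ (β - 1) * (t ^ β - s ^ β - β * s ^ (β - 1) * (t - s)) :=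
    max_rpow_mul_sq_le_rpowBregman hβ hs ht
  rw [← hs₁] at at_mul
  rw [← hs₂] at at_zero ⊢
  -- both sides are affine in `u`, so the endpoint cases `u = 0` and `u = s * t` suffice
  rcases le_total (2 * M) (β * (β - 1) * s ^ (β - 2)) with hc | hc
  · nlinarith [mul_nonneg (sub_nonneg.2 hust) (sub_nonneg.2 hc)]
  · nlinarith [mul_nonneg hu (sub_nonneg.2 hc)]

lemma enorm_nonneg (p : ℝ × ℝ) : 0 ≤ _root_.enorm p := Real.sqrt_nonneg _

lemma enorm_sq (p : ℝ × ℝ) : _root_.enorm p ^ 2 = p.1 ^ 2 + p.2 ^ 2 :=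
  Real.sq_sqrt (by positivity)

lemma mul_add_mul_le_enorm_mul_enorm (p r : ℝ × ℝ) :
    p.1 * r.1 + p.2 * r.2 ≤ _root_.enorm p * _root_.enorm r := by
  rw [_root_.enorm, _root_.enorm, ← Real.sqrt_mul (by positivity)]
  exact Real.le_sqrt_of_sq_le (by nlinarith [sq_nonneg (p.1 * r.2 - p.2 * r.1)])

lemma Gfun_eq_enorm_rpow (β : ℝ) (q : ℝ × ℝ) : Gfun β q = _root_.enorm (pmap q) ^ β := by
  rw [Gfun, _root_.enorm, Real.sqrt_eq_rpow, ← Real.rpow_mul (by positivity), one_div,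
    inv_mul_eq_div]

lemma max_zero_mul_sub_le (x y : ℝ) : max x 0 * (y - x) ≤ max x 0 * max y 0 - max x 0 ^ 2 := by
  rcases le_total x 0 with hx | hx
  · simp [max_eq_right hx]
  · rw [max_eq_left hx]
    nlinarith [le_max_left y 0]

lemma gradG_dot_sub_le {β : ℝ} (hβ : 0 ≤ β) (q qt : ℝ × ℝ) :
    (gradG β q).1 * (qt.1 - q.1) + (gradG β q).2 * (qt.2 - q.2) ≤
      β * _root_.enorm (pmap q) ^ (β - 2) * ((pmap q).1 * (pmap qt).1 + (pmap q).2 * (pmap qt).2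
        - _root_.enorm (pmap q) ^ 2) := by
  have hc : 0 ≤ β * _root_.enorm (pmap q) ^ (β - 2) :=
    mul_nonneg hβ (Real.rpow_nonneg (enorm_nonneg _) _)
  have h₁ := max_zero_mul_sub_le (-q.1) (-qt.1)
  have h₂ := max_zero_mul_sub_le q.2 qt.2
  calc (gradG β q).1 * (qt.1 - q.1) + (gradG β q).2 * (qt.2 - q.2)
      = β * _root_.enorm (pmap q) ^ (β - 2) *
          (max (-q.1) 0 * (-qt.1 - -q.1) + max q.2 0 * (qt.2 - q.2)) := by
        simp only [gradG, pmap]; ring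
    _ ≤ _ := by
        rw [enorm_sq]
        exact mul_le_mul_of_nonneg_left (by simp only [pmap]; linarith) hc

/-- Convexity-type lower bound for
`G(q̃) - G(q) - ∇G(q)·(q̃ - q)`. -/
theorem stmt_12 (β : ℝ) (hβ : 2 ≤ β) (q qt : ℝ × ℝ) :
    Gfun β qt - Gfun β q -
        ((gradG β q).1 * (qt.1 - q.1) + (gradG β q).2 * (qt.2 - q.2)) ≥
      (1 / (β - 1)) *
        max (_root_.enorm (pmap q) ^ (β - 2)) (_root_.enorm (pmap qt) ^ (β - 2)) *
        (((pmap q).1 - (pmap qt).1) ^ 2 + ((pmap q).2 - (pmap qt).2) ^ 2) := by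
  set a := pmap q
  set b := pmap qt
  have hu : 0 ≤ a.1 * b.1 + a.2 * b.2 := by
    simp only [a, b, pmap]; positivity
  have hkey := max_rpow_mul_sq_le_of_le_mul hβ (enorm_nonneg a) (enorm_nonneg b) hu
    (mul_add_mul_le_enorm_mul_enorm a b)
  have hgrad := gradG_dot_sub_le (β := β) (by linarith) q qt
  have hdist : (a.1 - b.1) ^ 2 + (a.2 - b.2) ^ 2 =
      _root_.enorm a ^ 2 + _root_.enorm b ^ 2 - 2 * (a.1 * b.1 + a.2 * b.2) := by
    rw [enorm_sq, enorm_sq]; ring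
  rw [ge_iff_le, Gfun_eq_enorm_rpow, Gfun_eq_enorm_rpow, hdist,
    ← Real.rpow_max (enorm_nonneg a) (enorm_nonneg b) (by linarith), mul_assoc, one_div,
    inv_mul_le_iff₀ (by linarith)]
  nlinarith [mul_le_mul_of_nonneg_left hgrad (by linarith : (0 : ℝ) ≤ β - 1)]
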